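/- For all indices 0 ≤ t₀ ≤ t₁ ≤ t ≤ T−2, the closed-loop transition matrices of the truncated Riccati recursion satisfy ‖(A + BK_{t₁|t})(A + BK_{t₁−1|t})···(A + BK_{t₀|t})‖ ≤ C·η^{t₁−t₀+1}, where C := λ_max(P̄_max)/λ_min(Q̄_min) and η := √(1 − λ_min(Q̄_min)/λ_max(P̄_max)). -/

import Mathlib

/-! For fixed `t`, write `P_i = P_{i|t}`. Every truncated cost lies between the bounds, so by
induction `Qmin ⪯ P_i ⪯ Pm`: below, because a Riccati step adds `Q_i ⪰ Qmin` to positive terms;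
above, because the step is monotone in `(R, Q, P)` and `Pm` is its fixed point for
`(Rmax, Qmax)`. The Joseph form `P_i = Q_i + KᵀRK + (A + BK)ᵀ P_{i+1} (A + BK)` makes `P_i` a
Lyapunov function of the closed loop: with `ρ = λmin(Qmin) / λmax(Pm)` we have `ρ P_i ⪯ Q_i`, hence
`(A + BK_i)ᵀ P_{i+1} (A + BK_i) ⪯ (1 - ρ) P_i`. Iterating along the product `Φ` and comparing
`λmin(Qmin) I ⪯ P ⪯ λmax(Pm) I` gives `‖Φ‖² ≤ C (1 - ρ)^k = C η^{2k} ≤ (C η^k)²` since `C ≥ 1`. -/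

open Matrix Finset
open scoped Matrix.Norms.L2Operator

noncomputable section

/-- Euclidean norm of a real vector. -/
def enorm {k : ℕ} (x : Fin k → ℝ) : ℝ := ‖(WithLp.equiv 2 (Fin k → ℝ)).symm x‖

/-- Largest eigenvalue (supremum of the real spectrum) of a square real matrix. -/
def lmax {k : ℕ} (M : Matrix (Fin k) (Fin k) ℝ) : ℝ := sSup (spectrum ℝ M)

/-- Smallest eigenvalue (infimum of the real spectrum) of a square real matrix. -/
def lmin {k : ℕ} (M : Matrix (Fin k) (Fin k) ℝ) : ℝ := sInf (spectrum ℝ M)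

variable {n m : ℕ}

/-- The LQR feedback gain associated with cost matrix `R` and value matrix `P'`. -/
def gainK (A : Matrix (Fin n) (Fin n) ℝ) (B : Matrix (Fin n) (Fin m) ℝ)
    (R : Matrix (Fin m) (Fin m) ℝ) (P' : Matrix (Fin n) (Fin n) ℝ) :
    Matrix (Fin m) (Fin n) ℝ :=
  -((R + Bᵀ * P' * B)⁻¹ * Bᵀ * P' * A)

/-- One backwards Riccati step. -/
def ricStep (A : Matrix (Fin n) (Fin n) ℝ) (B : Matrix (Fin n) (Fin m) ℝ)
    (R : Matrix (Fin m) (Fin m) ℝ) (Q P' : Matrix (Fin n) (Fin n) ℝ) :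
    Matrix (Fin n) (Fin n) ℝ :=
  Aᵀ * P' * A + Q + Aᵀ * P' * B * gainK A B R P'

/-- Truncated cost matrices `Q_{i|s}`. -/
def trunc {N : Type*} (Q : ℕ → N) (i s : ℕ) : N := if i ≤ s then Q i else Q s

/-- Backwards truncated Riccati recursion: `ricBackTr A B T Q R s d = P_{T-1-d|s}`. -/
def ricBackTr (A : Matrix (Fin n) (Fin n) ℝ) (B : Matrix (Fin n) (Fin m) ℝ) (T : ℕ)
    (Q : ℕ → Matrix (Fin n) (Fin n) ℝ) (R : ℕ → Matrix (Fin m) (Fin m) ℝ) (s : ℕ) :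
    ℕ → Matrix (Fin n) (Fin n) ℝ
  | 0 => trunc Q (T - 1) s
  | d + 1 => ricStep A B (trunc R (T - 2 - d) s) (trunc Q (T - 2 - d) s)
      (ricBackTr A B T Q R s d)

/-- `Pts A B T Q R i s = P_{i|s}`, the truncated Riccati value matrix. -/
def Pts (A : Matrix (Fin n) (Fin n) ℝ) (B : Matrix (Fin n) (Fin m) ℝ) (T : ℕ)
    (Q : ℕ → Matrix (Fin n) (Fin n) ℝ) (R : ℕ → Matrix (Fin m) (Fin m) ℝ) (i s : ℕ) :
    Matrix (Fin n) (Fin n) ℝ :=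
  ricBackTr A B T Q R s (T - 1 - i)

/-- `Kts A B T Q R i s = K_{i|s}`, the truncated Riccati gain. -/
def Kts (A : Matrix (Fin n) (Fin n) ℝ) (B : Matrix (Fin n) (Fin m) ℝ) (T : ℕ)
    (Q : ℕ → Matrix (Fin n) (Fin n) ℝ) (R : ℕ → Matrix (Fin m) (Fin m) ℝ) (i s : ℕ) :
    Matrix (Fin m) (Fin n) ℝ :=
  gainK A B (trunc R i s) (Pts A B T Q R (i + 1) s)

/-- `xts A B T Q R x₀ s i = x_{i|s}`, the predicted trajectory planned with information up to
time `s`. -/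
def xts (A : Matrix (Fin n) (Fin n) ℝ) (B : Matrix (Fin n) (Fin m) ℝ) (T : ℕ)
    (Q : ℕ → Matrix (Fin n) (Fin n) ℝ) (R : ℕ → Matrix (Fin m) (Fin m) ℝ)
    (x₀ : Fin n → ℝ) (s : ℕ) : ℕ → Fin n → ℝ
  | 0 => x₀
  | i + 1 => (A + B * Kts A B T Q R i s) *ᵥ xts A B T Q R x₀ s i

open scoped MatrixOrder

lemma Matrix.le_of_smul_one_le_smul_one {ι : Type*} [DecidableEq ι] [Nonempty ι] {a b : ℝ}
    (h : a • (1 : Matrix ι ι ℝ) ≤ b • 1) : a ≤ b := by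
  obtain ⟨i⟩ := ‹Nonempty ι›
  simpa using (le_iff.1 h).diag_nonneg (i := i)

section Loewner

variable {ι κ : Type*} [Fintype ι] [Fintype κ]

lemma Matrix.transpose_mul_mul_le_transpose_mul_mul {X Y : Matrix ι ι ℝ} (h : X ≤ Y)
    (M : Matrix ι κ ℝ) : Mᵀ * X * M ≤ Mᵀ * Y * M := by
  rw [le_iff] at h ⊢
  simpa [Matrix.mul_sub, Matrix.sub_mul] using h.conjTranspose_mul_mul_same M

lemma Matrix.transpose_mul_mul_nonneg {X : Matrix ι ι ℝ} (h : 0 ≤ X) (M : Matrix ι κ ℝ) :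
    0 ≤ Mᵀ * X * M := by
  simpa using transpose_mul_mul_le_transpose_mul_mul h M

lemma Matrix.div_smul_le_of_le_smul_one [DecidableEq ι] {P Q : Matrix ι ι ℝ} {a b : ℝ}
    (ha : 0 ≤ a) (hb : 0 < b) (hP : P ≤ b • 1) (hQ : a • 1 ≤ Q) : (a / b) • P ≤ Q :=
  calc (a / b) • P ≤ (a / b) • b • (1 : Matrix ι ι ℝ) :=
        smul_le_smul_of_nonneg_left hP (div_nonneg ha hb.le)
    _ = a • 1 := by rw [smul_smul, div_mul_cancel₀ _ hb.ne']
    _ ≤ Q := hQ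

lemma Matrix.transpose_mul_mul_list_prod_le [DecidableEq ι] {M P : ℕ → Matrix ι ι ℝ} {c : ℝ}
    (hc : 0 ≤ c) {k : ℕ} (h : ∀ j < k, (M j)ᵀ * P j * M j ≤ c • P (j + 1)) :
    ((List.range k).map M).prodᵀ * P 0 * ((List.range k).map M).prod ≤ c ^ k • P k := by
  induction k with
  | zero => simp
  | succ k ih =>
    set Φ := ((List.range k).map M).prod
    rw [List.range_succ, List.map_append, List.prod_append, List.map_singleton,
      List.prod_singleton, Matrix.transpose_mul]
    calc (M k)ᵀ * Φᵀ * P 0 * (Φ * M k) = (M k)ᵀ * (Φᵀ * P 0 * Φ) * M k := by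
          simp only [Matrix.mul_assoc]
      _ ≤ (M k)ᵀ * (c ^ k • P k) * M k :=
          transpose_mul_mul_le_transpose_mul_mul (ih fun j hj => h j (by omega)) _
      _ = c ^ k • ((M k)ᵀ * P k * M k) := by rw [Matrix.mul_smul, Matrix.smul_mul]
      _ ≤ c ^ k • c • P (k + 1) := smul_le_smul_of_nonneg_left (h k k.lt_succ_self) (by positivity)
      _ = c ^ (k + 1) • P (k + 1) := by rw [smul_smul, pow_succ]

end Loewner

section L2OpNorm

variable {ι : Type*} [Fintype ι] [DecidableEq ι]

lemma Matrix.l2_opNorm_le_of_le_smul_one {M : Matrix ι ι ℝ} {c : ℝ} (hc : 0 ≤ c) (h₀ : 0 ≤ M)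
    (h : M ≤ c • 1) : ‖M‖ ≤ c := by
  rw [← Algebra.algebraMap_eq_smul_one, le_algebraMap_iff_spectrum_le (R := ℝ)] at h
  rw [← cfc_id ℝ M]
  exact norm_cfc_le hc fun x hx => by
    rw [id, Real.norm_of_nonneg (spectrum_nonneg_of_nonneg h₀ hx)]
    exact h x hx

lemma Matrix.l2_opNorm_sq_le_of_transpose_mul_mul_le {Φ P : Matrix ι ι ℝ} {a c : ℝ} (ha : 0 < a)
    (hc : 0 ≤ c) (hP : a • 1 ≤ P) (h : Φᵀ * P * Φ ≤ c • 1) : ‖Φ‖ ^ 2 ≤ c / a := by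
  have hΦ : a • (Φᵀ * Φ) ≤ c • 1 := by
    simpa [Matrix.mul_smul, Matrix.smul_mul] using
      (transpose_mul_mul_le_transpose_mul_mul hP Φ).trans h
  rw [sq, ← l2_opNorm_conjTranspose_mul_self]
  refine l2_opNorm_le_of_le_smul_one (div_nonneg hc ha.le) (star_mul_self_nonneg Φ) ?_
  calc Φᵀ * Φ = a⁻¹ • a • (Φᵀ * Φ) := by rw [inv_smul_smul₀ ha.ne']
    _ ≤ a⁻¹ • c • (1 : Matrix ι ι ℝ) := smul_le_smul_of_nonneg_left hΦ (inv_nonneg.2 ha.le)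
    _ = (c / a) • 1 := by rw [smul_smul, inv_mul_eq_div]

lemma Matrix.l2_opNorm_le_of_transpose_mul_mul_le_pow {Φ P₀ P₁ : Matrix ι ι ℝ} {a b : ℝ} {k : ℕ}
    (ha : 0 < a) (hab : a ≤ b) (h₁ : a • 1 ≤ P₁) (h₀ : P₀ ≤ b • 1)
    (h : Φᵀ * P₁ * Φ ≤ (1 - a / b) ^ k • P₀) : ‖Φ‖ ≤ b / a * √(1 - a / b) ^ k := by
  have hb : 0 < b := ha.trans_le hab
  have hρ : 0 ≤ 1 - a / b := sub_nonneg.2 ((div_le_one hb).2 hab)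
  have hsq : ‖Φ‖ ^ 2 ≤ (1 - a / b) ^ k * b / a := by
    refine l2_opNorm_sq_le_of_transpose_mul_mul_le ha (by positivity) h₁ ?_
    rw [← smul_smul]
    exact h.trans (smul_le_smul_of_nonneg_left h₀ (pow_nonneg hρ k))
  refine le_of_pow_le_pow_left₀ two_ne_zero (by positivity) (hsq.trans ?_)
  have hC : 1 ≤ b / a := (one_le_div ha).2 hab
  calc (1 - a / b) ^ k * b / a = b / a * (√(1 - a / b) ^ k) ^ 2 := by
        rw [← pow_mul, mul_comm k 2, pow_mul, Real.sq_sqrt hρ]; ring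
    _ ≤ (b / a) ^ 2 * (√(1 - a / b) ^ k) ^ 2 := by gcongr; nlinarith
    _ = (b / a * √(1 - a / b) ^ k) ^ 2 := by ring

end L2OpNorm

section Spectrum

variable {k : ℕ} {M : Matrix (Fin k) (Fin k) ℝ}

lemma le_lmax_smul_one (hM : M.IsHermitian) : M ≤ lmax M • 1 := by
  rw [← Algebra.algebraMap_eq_smul_one]
  exact le_algebraMap_of_spectrum_le (fun x hx => le_csSup (finite_spectrum M).bddAbove hx)
    hM.isSelfAdjoint

lemma lmin_smul_one_le (hM : M.IsHermitian) : lmin M • 1 ≤ M := by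
  rw [← Algebra.algebraMap_eq_smul_one]
  exact algebraMap_le_of_le_spectrum (fun x hx => csInf_le (finite_spectrum M).bddBelow hx)
    hM.isSelfAdjoint

lemma lmin_pos [Nonempty (Fin k)] (hM : M.PosDef) : 0 < lmin M := by
  rw [lmin, hM.isHermitian.spectrum_real_eq_range_eigenvalues]
  obtain ⟨i, hi⟩ := (Set.range_nonempty hM.isHermitian.eigenvalues).csInf_mem (Set.finite_range _)
  exact hi ▸ hM.eigenvalues_pos i

end Spectrum

section Riccati

variable (A : Matrix (Fin n) (Fin n) ℝ) (B : Matrix (Fin n) (Fin m) ℝ)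
  {R R' : Matrix (Fin m) (Fin m) ℝ} {Q Q' P P' : Matrix (Fin n) (Fin n) ℝ}

lemma posDef_add_transpose_mul_mul (hR : R.PosDef) (hP : 0 ≤ P) : (R + Bᵀ * P * B).PosDef :=
  hR.add_posSemidef (nonneg_iff_posSemidef.1 (transpose_mul_mul_nonneg hP B))

lemma mul_gainK (hR : R.PosDef) (hP : 0 ≤ P) :
    (R + Bᵀ * P * B) * gainK A B R P = -(Bᵀ * P * A) := by
  have hS := (posDef_add_transpose_mul_mul B hR hP).isUnit
  rw [gainK, Matrix.mul_neg, neg_inj]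
  simp only [← Matrix.mul_assoc, Matrix.mul_nonsing_inv _ ((isUnit_iff_isUnit_det _).1 hS),
    Matrix.one_mul]

lemma add_transpose_mul_mul_eq_ricStep_add (hR : R.PosDef) (hP : 0 ≤ P)
    (Q : Matrix (Fin n) (Fin n) ℝ) (K : Matrix (Fin m) (Fin n) ℝ) :
    Q + Kᵀ * R * K + (A + B * K)ᵀ * P * (A + B * K) = ricStep A B R Q P
      + (K - gainK A B R P)ᵀ * (R + Bᵀ * P * B) * (K - gainK A B R P) := by
  have hRT : Rᵀ = R := (isHermitian_iff_isSymm.1 hR.isHermitian).eq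
  have hPT : Pᵀ = P := (isHermitian_iff_isSymm.1 (nonneg_iff_posSemidef.1 hP).isHermitian).eq
  have hz : (R + Bᵀ * P * B) * gainK A B R P + Bᵀ * P * A = 0 := by
    rw [mul_gainK A B hR hP, neg_add_cancel]
  have hz' : (gainK A B R P)ᵀ * (R + Bᵀ * P * B) + Aᵀ * P * B = 0 := by
    simpa [Matrix.transpose_add, Matrix.transpose_mul, hRT, hPT, Matrix.mul_assoc] using
      congrArg Matrix.transpose hz
  rw [ricStep]
  generalize gainK A B R P = K₀ at hz hz' ⊢
  obtain ⟨D, rfl⟩ : ∃ D, K = K₀ + D := ⟨K - K₀, by abel⟩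
  calc _ = Aᵀ * P * A + Q + Aᵀ * P * B * K₀ + Dᵀ * (R + Bᵀ * P * B) * D
        + K₀ᵀ * ((R + Bᵀ * P * B) * K₀ + Bᵀ * P * A)
        + Dᵀ * ((R + Bᵀ * P * B) * K₀ + Bᵀ * P * A)
        + (K₀ᵀ * (R + Bᵀ * P * B) + Aᵀ * P * B) * D := by
        simp only [Matrix.transpose_add, Matrix.transpose_mul, Matrix.mul_add, Matrix.add_mul,
          Matrix.mul_assoc]
        abel
    _ = _ := by simp [hz, hz']

lemma ricStep_eq_joseph (hR : R.PosDef) (hP : 0 ≤ P) (Q : Matrix (Fin n) (Fin n) ℝ) :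
    ricStep A B R Q P = Q + (gainK A B R P)ᵀ * R * gainK A B R P
      + (A + B * gainK A B R P)ᵀ * P * (A + B * gainK A B R P) := by
  rw [add_transpose_mul_mul_eq_ricStep_add A B hR hP, sub_self, Matrix.transpose_zero,
    Matrix.zero_mul, Matrix.mul_zero, add_zero]

lemma ricStep_le (hR : R.PosDef) (hP : 0 ≤ P) (Q : Matrix (Fin n) (Fin n) ℝ)
    (K : Matrix (Fin m) (Fin n) ℝ) :
    ricStep A B R Q P ≤ Q + Kᵀ * R * K + (A + B * K)ᵀ * P * (A + B * K) := by
  rw [add_transpose_mul_mul_eq_ricStep_add A B hR hP]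
  exact le_add_of_nonneg_right <|
    transpose_mul_mul_nonneg (posDef_add_transpose_mul_mul B hR hP).posSemidef.nonneg _

lemma add_closedLoop_le_ricStep (hR : R.PosDef) (hP : 0 ≤ P) (Q : Matrix (Fin n) (Fin n) ℝ) :
    Q + (A + B * gainK A B R P)ᵀ * P * (A + B * gainK A B R P) ≤ ricStep A B R Q P := by
  rw [ricStep_eq_joseph A B hR hP, add_right_comm]
  exact le_add_of_nonneg_right (transpose_mul_mul_nonneg hR.posSemidef.nonneg _)

lemma le_ricStep (hR : R.PosDef) (hP : 0 ≤ P) (Q : Matrix (Fin n) (Fin n) ℝ) :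
    Q ≤ ricStep A B R Q P :=
  (le_add_of_nonneg_right (transpose_mul_mul_nonneg hP _)).trans
    (add_closedLoop_le_ricStep A B hR hP Q)

lemma ricStep_mono (hR : R.PosDef) (hP : 0 ≤ P) (hRR' : R ≤ R') (hQQ' : Q ≤ Q') (hPP' : P ≤ P') :
    ricStep A B R Q P ≤ ricStep A B R' Q' P' := by
  have hR' : R'.PosDef := by simpa using hR.add_posSemidef hRR'
  rw [ricStep_eq_joseph A B hR' (hP.trans hPP')]
  refine (ricStep_le A B hR hP Q (gainK A B R' P')).trans ?_
  gcongr
  exacts [transpose_mul_mul_le_transpose_mul_mul hRR' _,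
    transpose_mul_mul_le_transpose_mul_mul hPP' _]

lemma ricStep_eq_self_of_dare
    (h : P = Q + Aᵀ * P * A - Aᵀ * P * B * (R + Bᵀ * P * B)⁻¹ * Bᵀ * P * A) :
    ricStep A B R Q P = P := by
  rw [ricStep, gainK]
  conv_rhs => rw [h]
  simp only [Matrix.mul_neg, ← Matrix.mul_assoc]
  abel

end Riccati

lemma trunc_of_forall_le {N : Type*} {p : N → Prop} {f : ℕ → N} {L s : ℕ}
    (hf : ∀ i ≤ L, p (f i)) (hs : s ≤ L) (i : ℕ) : p (trunc f i s) := by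
  unfold trunc
  split_ifs with h
  exacts [hf i (h.trans hs), hf s hs]

section TruncatedRiccati

variable {A : Matrix (Fin n) (Fin n) ℝ} {B : Matrix (Fin n) (Fin m) ℝ} {T : ℕ}
  {Q : ℕ → Matrix (Fin n) (Fin n) ℝ} {R : ℕ → Matrix (Fin m) (Fin m) ℝ} {s : ℕ}

lemma Pts_eq_ricStep (hT : 2 ≤ T) {i : ℕ} (hi : i ≤ T - 2) :
    Pts A B T Q R i s = ricStep A B (trunc R i s) (trunc Q i s) (Pts A B T Q R (i + 1) s) := by
  obtain ⟨d, hd⟩ : ∃ d, T - 1 - i = d + 1 := ⟨T - 2 - i, by omega⟩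
  rw [Pts, Pts, hd, ricBackTr, show T - 2 - d = i by omega, show T - 1 - (i + 1) = d by omega]

lemma ricBackTr_mem_Icc {Qmin Qmax Pm : Matrix (Fin n) (Fin n) ℝ}
    {Rmax : Matrix (Fin m) (Fin m) ℝ} (hQmin : 0 ≤ Qmin)
    (hQ : ∀ j, trunc Q j s ∈ Set.Icc Qmin Qmax)
    (hR : ∀ j, (trunc R j s).PosDef ∧ trunc R j s ≤ Rmax) (hPm : 0 ≤ Pm)
    (hfix : ricStep A B Rmax Qmax Pm = Pm) (d : ℕ) :
    ricBackTr A B T Q R s d ∈ Set.Icc Qmin Pm := by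
  have hRmax : Rmax.PosDef := by simpa using (hR 0).1.add_posSemidef (hR 0).2
  induction d with
  | zero => exact ⟨(hQ _).1, (hQ _).2.trans ((le_ricStep A B hRmax hPm Qmax).trans_eq hfix)⟩
  | succ d ih =>
    have hP := hQmin.trans ih.1
    exact ⟨(hQ _).1.trans (le_ricStep A B (hR _).1 hP _),
      (ricStep_mono A B (hR _).1 hP (hR _).2 (hQ _).2 ih.2).trans_eq hfix⟩

lemma closedLoop_Kts_le (hT : 2 ≤ T) {i : ℕ} (hi : i ≤ T - 2) (hR : (trunc R i s).PosDef)
    (hP : 0 ≤ Pts A B T Q R (i + 1) s) {ρ : ℝ} (hρ : ρ • Pts A B T Q R i s ≤ trunc Q i s) :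
    (A + B * Kts A B T Q R i s)ᵀ * Pts A B T Q R (i + 1) s * (A + B * Kts A B T Q R i s)
      ≤ (1 - ρ) • Pts A B T Q R i s := by
  have h := add_closedLoop_le_ricStep A B hR hP (trunc Q i s)
  rw [← Pts_eq_ricStep hT hi] at h
  rw [sub_smul, one_smul]
  exact le_sub_iff_add_le'.2 ((add_le_add_left hρ _).trans h)

end TruncatedRiccati

theorem truncated_riccati_closed_loop_contraction_general {n m : ℕ} (hn : 1 ≤ n)
    (A : Matrix (Fin n) (Fin n) ℝ) (B : Matrix (Fin n) (Fin m) ℝ)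
    (T : ℕ) (hT : 2 ≤ T)
    (Q : ℕ → Matrix (Fin n) (Fin n) ℝ) (R : ℕ → Matrix (Fin m) (Fin m) ℝ)
    (hR : ∀ t ≤ T - 2, (R t).PosDef)
    (Qmin Qmax : Matrix (Fin n) (Fin n) ℝ) (Rmax : Matrix (Fin m) (Fin m) ℝ)
    (hQminPD : Qmin.PosDef)
    (hQlb : ∀ t ≤ T - 1, (Q t - Qmin).PosSemidef)
    (hQub : ∀ t ≤ T - 1, (Qmax - Q t).PosSemidef)
    (hRub : ∀ t ≤ T - 2, (Rmax - R t).PosSemidef)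
    (Pm : Matrix (Fin n) (Fin n) ℝ) (hPmPD : Pm.PosDef)
    (hDARE : Pm = Qmax + Aᵀ * Pm * A -
      Aᵀ * Pm * B * (Rmax + Bᵀ * Pm * B)⁻¹ * Bᵀ * Pm * A)
    (C : ℝ) (hC : C = lmax Pm / lmin Qmin)
    (η : ℝ) (hη : η = Real.sqrt (1 - lmin Qmin / lmax Pm)) :
    ∀ t₀ t₁ t : ℕ, t₀ ≤ t₁ → t₁ ≤ t → t ≤ T - 2 →
      ‖((List.range (t₁ + 1 - t₀)).map fun j => A + B * Kts A B T Q R (t₁ - j) t).prod‖ ≤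
        C * η ^ (t₁ - t₀ + 1) := by
  intro t₀ t₁ t h₀₁ h₁ h
  have : Nonempty (Fin n) := ⟨⟨0, hn⟩⟩
  have hQt : ∀ j, trunc Q j t ∈ Set.Icc Qmin Qmax :=
    trunc_of_forall_le (fun j hj => ⟨hQlb j hj, hQub j hj⟩) (by omega)
  have hRt : ∀ j, (trunc R j t).PosDef ∧ trunc R j t ≤ Rmax :=
    trunc_of_forall_le (p := fun M => M.PosDef ∧ M ≤ Rmax) (fun j hj => ⟨hR j hj, hRub j hj⟩) h
  have hP : ∀ i, Pts A B T Q R i t ∈ Set.Icc Qmin Pm := fun i =>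
    ricBackTr_mem_Icc hQminPD.posSemidef.nonneg hQt hRt hPmPD.posSemidef.nonneg
      (ricStep_eq_self_of_dare A B hDARE) _
  have hlQ := lmin_pos hQminPD
  have hQmin := lmin_smul_one_le hQminPD.isHermitian
  have hPm := le_lmax_smul_one hPmPD.isHermitian
  have hQP : lmin Qmin ≤ lmax Pm :=
    le_of_smul_one_le_smul_one (hQmin.trans (((hP 0).1.trans (hP 0).2).trans hPm))
  have hstep : ∀ i ≤ t, (A + B * Kts A B T Q R i t)ᵀ * Pts A B T Q R (i + 1) t *
      (A + B * Kts A B T Q R i t) ≤ (1 - lmin Qmin / lmax Pm) • Pts A B T Q R i t :=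
    fun i hi => closedLoop_Kts_le hT (by omega) (hRt i).1
      (hQminPD.posSemidef.nonneg.trans (hP _).1)
      (div_smul_le_of_le_smul_one hlQ.le (hlQ.trans_le hQP)
        ((hP i).2.trans hPm) (hQmin.trans (hQt i).1))
  have hdecay := transpose_mul_mul_list_prod_le (k := t₁ + 1 - t₀)
    (M := fun j => A + B * Kts A B T Q R (t₁ - j) t) (P := fun j => Pts A B T Q R (t₁ + 1 - j) t)
    (sub_nonneg.2 ((div_le_one (hlQ.trans_le hQP)).2 hQP)) fun j hj => by
      rw [show t₁ + 1 - j = t₁ - j + 1 by omega, show t₁ + 1 - (j + 1) = t₁ - j by omega]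
      exact hstep _ (by omega)
  rw [Nat.sub_zero, show t₁ + 1 - (t₁ + 1 - t₀) = t₀ by omega] at hdecay
  rw [hC, hη, show t₁ - t₀ + 1 = t₁ + 1 - t₀ by omega]
  exact l2_opNorm_le_of_transpose_mul_mul_le_pow hlQ hQP
    (hQmin.trans (hP (t₁ + 1)).1) ((hP t₀).2.trans hPm) hdecay

/-- Exponential stability of the closed-loop transition matrices of the truncated Riccati
recursion: `‖(A + BK_{t₁|t})⋯(A + BK_{t₀|t})‖ ≤ C·η^{t₁−t₀+1}`. -/
theorem truncated_riccati_closed_loop_contraction {n m : ℕ} (hn : 1 ≤ n) (hm : 1 ≤ m)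
    (A : Matrix (Fin n) (Fin n) ℝ) (B : Matrix (Fin n) (Fin m) ℝ)
    (T : ℕ) (hT : 2 ≤ T)
    (Q : ℕ → Matrix (Fin n) (Fin n) ℝ) (R : ℕ → Matrix (Fin m) (Fin m) ℝ)
    (hQ : ∀ t ≤ T - 1, (Q t).PosSemidef) (hR : ∀ t ≤ T - 2, (R t).PosDef)
    (Qmin Qmax : Matrix (Fin n) (Fin n) ℝ) (Rmin Rmax : Matrix (Fin m) (Fin m) ℝ)
    (hQminPD : Qmin.PosDef) (hRminPD : Rmin.PosDef)
    (hQmaxH : Qmax.IsHermitian) (hRmaxH : Rmax.IsHermitian)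
    (hQlb : ∀ t ≤ T - 1, (Q t - Qmin).PosSemidef)
    (hQub : ∀ t ≤ T - 1, (Qmax - Q t).PosSemidef)
    (hRlb : ∀ t ≤ T - 2, (R t - Rmin).PosSemidef)
    (hRub : ∀ t ≤ T - 2, (Rmax - R t).PosSemidef)
    (Pm : Matrix (Fin n) (Fin n) ℝ) (hPmPD : Pm.PosDef)
    (hDARE : Pm = Qmax + Aᵀ * Pm * A -
      Aᵀ * Pm * B * (Rmax + Bᵀ * Pm * B)⁻¹ * Bᵀ * Pm * A)
    (C : ℝ) (hC : C = lmax Pm / lmin Qmin)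
    (η : ℝ) (hη : η = Real.sqrt (1 - lmin Qmin / lmax Pm)) :
    ∀ t₀ t₁ t : ℕ, t₀ ≤ t₁ → t₁ ≤ t → t ≤ T - 2 →
      ‖((List.range (t₁ + 1 - t₀)).map fun j => A + B * Kts A B T Q R (t₁ - j) t).prod‖ ≤
        C * η ^ (t₁ - t₀ + 1) :=
  truncated_riccati_closed_loop_contraction_general hn A B T hT Q R hR Qmin Qmax Rmax hQminPD hQlb
    hQub hRub Pm hPmPD hDARE C hC η hη

end
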